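/- arXiv:1701.03635 — 10 statements merged into one kernel-verified Lean document; each statement's English description precedes it below -/
import Mathlib

section
/- Let A ⊆ B be integral domains and suppose there exists f ∈ A such that A_f = B_f (as subrings of the fraction field of B) and fB ∩ A = fA. Then A = B. -/
/-!
The condition `fB ∩ A = fA` says exactly that `A` is saturated with respect to `f` inside `B`:
`f * b ∈ A` forces `b ∈ A`. Iterating, `f ^ n * b ∈ A` forces `b ∈ A`, and `A_f = B_f` provides
such an `n` for every `b ∈ B`.
-/

namespace Subring

variable {B : Type*} [CommRing B] {A : Subring B} {f : B}

theorem mem_of_mul_mem (hf : IsLeftRegular f)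
    (hcap : ∀ a ∈ A, (∃ b : B, a = f * b) → ∃ a' ∈ A, a = f * a') {b : B} (hb : f * b ∈ A) :
    b ∈ A := by
  obtain ⟨a', ha', hfa'⟩ := hcap (f * b) hb ⟨b, rfl⟩
  rwa [hf hfa']

theorem mem_of_pow_mul_mem (hf : IsLeftRegular f)
    (hcap : ∀ a ∈ A, (∃ b : B, a = f * b) → ∃ a' ∈ A, a = f * a') {b : B} :
    ∀ {n : ℕ}, f ^ n * b ∈ A → b ∈ A
  | 0, hb => by simpa using hb
  | n + 1, hb => mem_of_pow_mul_mem hf hcap <| mem_of_mul_mem hf hcap <| by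
      rwa [← mul_assoc, ← pow_succ']

end Subring

theorem stmt0_general {B : Type*} [CommRing B] [IsDomain B] (A : Subring B) (f : B)
    (hf0 : f ≠ 0)
    (hloc : ∀ b : B, ∃ n : ℕ, f ^ n * b ∈ A)
    (hcap : ∀ a ∈ A, (∃ b : B, a = f * b) → ∃ a' ∈ A, a = f * a') :
    A = ⊤ := by
  refine eq_top_iff.mpr fun b _ => ?_
  obtain ⟨n, hn⟩ := hloc b
  exact Subring.mem_of_pow_mul_mem (IsLeftCancelMulZero.mul_left_cancel_of_ne_zero hf0) hcap hn

/-- Let `A ⊆ B` be integral domains and `f ∈ A` nonzero such that `A_f = B_f`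
(every element of `B` lands in `A` after multiplying by a power of `f`) and
`fB ∩ A = fA`. Then `A = B`. -/
theorem stmt0 {B : Type*} [CommRing B] [IsDomain B] (A : Subring B) (f : B)
    (hfA : f ∈ A) (hf0 : f ≠ 0)
    (hloc : ∀ b : B, ∃ n : ℕ, f ^ n * b ∈ A)
    (hcap : ∀ a ∈ A, (∃ b : B, a = f * b) → ∃ a' ∈ A, a = f * a') :
    A = ⊤ :=
  stmt0_general A f hf0 hloc hcap
end

section
/- A factorially closed subring of a unique factorization domain is itself a unique factorization domain. -/
/-- Key lemma: if a product of primes times a nonzero element lies in a factorially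
closed subring, then all factors lie in the subring. -/
lemma key_lemma {B : Type*} [CommRing B] [IsDomain B] (A : Subring B)
    (hFC : ∀ f g : B, f ≠ 0 → g ≠ 0 → f * g ∈ A → f ∈ A ∧ g ∈ A)
    (s : Multiset B) (hs : ∀ b ∈ s, Prime b) :
    ∀ c : B, c ≠ 0 → s.prod * c ∈ A → (∀ b ∈ s, b ∈ A) ∧ c ∈ A := by
  induction s using Multiset.induction with
  | empty => intro c hc h; simpa using h
  | cons b s ih =>
    intro c hc h
    have hb : Prime b := hs b (Multiset.mem_cons_self _ _)
    have hs' : ∀ x ∈ s, Prime x := fun x hx => hs x (Multiset.mem_cons_of_mem hx)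
    have hsc : s.prod * c ≠ 0 :=
      mul_ne_zero (Multiset.prod_ne_zero (fun h0 => (hs' 0 h0).ne_zero rfl)) hc
    rw [Multiset.prod_cons, mul_assoc] at h
    obtain ⟨hbA, hrest⟩ := hFC b (s.prod * c) hb.ne_zero hsc h
    obtain ⟨h1, h2⟩ := ih hs' c hc hrest
    exact ⟨fun x hx => by
      rcases Multiset.mem_cons.mp hx with rfl | hx
      · exact hbA
      · exact h1 x hx, h2⟩

/-- A factorially closed subring of a UFD is a UFD. -/
theorem stmt1 {B : Type*} [CommRing B] [IsDomain B] [UniqueFactorizationMonoid B]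
    (A : Subring B)
    (hFC : ∀ f g : B, f ≠ 0 → g ≠ 0 → f * g ∈ A → f ∈ A ∧ g ∈ A) :
    UniqueFactorizationMonoid A := by
  -- units of B lying in A are units of A
  have hunit : ∀ a : A, IsUnit (a : B) → IsUnit a := by
    intro a ha
    obtain ⟨u, hu⟩ := ha
    have hinv : (a : B) * (↑u⁻¹ : B) = 1 := by rw [← hu]; exact u.mul_inv
    have haz : (a : B) ≠ 0 := by
      intro h0; rw [h0, zero_mul] at hinv; exact one_ne_zero hinv.symm
    have hiz : (↑u⁻¹ : B) ≠ 0 := u⁻¹.ne_zero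
    have hmem : (↑u⁻¹ : B) ∈ A := (hFC _ _ haz hiz (hinv ▸ A.one_mem)).2
    exact IsUnit.of_mul_eq_one (a := a) ⟨_, hmem⟩ (Subtype.ext hinv)
  -- primes of B lying in A are primes of A
  have hprime : ∀ p : A, Prime (p : B) → Prime p := by
    intro p hp
    refine ⟨fun h0 => hp.ne_zero (by rw [h0]; rfl), fun h => hp.not_unit (h.map A.subtype),
      fun x y hxy => ?_⟩
    have hdvd : (p : B) ∣ (x : B) * (y : B) := by
      obtain ⟨c, hc⟩ := hxy
      refine ⟨c, ?_⟩
      have := congrArg (Subtype.val) hc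
      simpa using this
    rcases hp.2.2 _ _ hdvd with hx | hx
    · left
      obtain ⟨d, hd⟩ := hx
      by_cases hx0 : (x : B) = 0
      · have : x = 0 := Subtype.ext hx0
        rw [this]; exact dvd_zero p
      · have hd0 : d ≠ 0 := fun h0 => hx0 (by rw [hd, h0, mul_zero])
        have hdA : d ∈ A := (hFC _ _ hp.ne_zero hd0 (hd ▸ x.2)).2
        exact ⟨⟨d, hdA⟩, Subtype.ext hd⟩
    · right
      obtain ⟨d, hd⟩ := hx
      by_cases hy0 : (y : B) = 0
      · have : y = 0 := Subtype.ext hy0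
        rw [this]; exact dvd_zero p
      · have hd0 : d ≠ 0 := fun h0 => hy0 (by rw [hd, h0, mul_zero])
        have hdA : d ∈ A := (hFC _ _ hp.ne_zero hd0 (hd ▸ y.2)).2
        exact ⟨⟨d, hdA⟩, Subtype.ext hd⟩
  apply UniqueFactorizationMonoid.of_exists_prime_factors
  intro a ha
  have haB : (a : B) ≠ 0 := fun h0 => ha (Subtype.ext h0)
  obtain ⟨f, hf, hfa⟩ := UniqueFactorizationMonoid.exists_prime_factors (a : B) haB
  obtain ⟨u, hu⟩ := hfa
  have hmem : f.prod * (u : B) ∈ A := hu ▸ a.2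
  obtain ⟨hfA, huA⟩ := key_lemma A hFC f hf (u : B) u.ne_zero hmem
  -- lift the multiset into A
  set t : Multiset A := f.attach.map (fun x => (⟨x.1, hfA x.1 x.2⟩ : A)) with ht
  have hmapt : t.map (fun x : A => (x : B)) = f := by
    simp [ht, Multiset.map_map, Function.comp]
  have hprod : ((t.prod : A) : B) = f.prod := by
    calc ((t.prod : A) : B) = (t.map (fun x : A => (x : B))).prod := by
          simp
      _ = f.prod := by rw [hmapt]
  refine ⟨t, ?_, ?_⟩
  · intro x hx
    obtain ⟨y, hy, rfl⟩ := Multiset.mem_map.mp hx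
    exact hprime _ (hf y.1 y.2)
  · have huu : IsUnit (⟨(u : B), huA⟩ : A) := hunit _ u.isUnit
    obtain ⟨v, hv⟩ := huu
    refine ⟨v, Subtype.ext ?_⟩
    have hv' : ((v : A) : B) = (u : B) := congrArg Subtype.val hv
    rw [Subring.coe_mul, hprod, hv', hu]
end

section
/- If A is a factorially closed subring of an integral domain B, then A is algebraically closed in B, i.e., every element of B that is algebraic over A (a root of a nonzero polynomial with coefficients in A) already lies in A. -/
/-- A factorially closed subring `A` of an integral domain `B` is algebraically
closed in `B`: every element of `B` that is a root of a nonzero polynomial with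
coefficients in `A` already lies in `A`. -/
theorem stmt2 {B : Type*} [CommRing B] [IsDomain B] (A : Subring B)
    (hFC : ∀ f g : B, f ≠ 0 → g ≠ 0 → f * g ∈ A → f ∈ A ∧ g ∈ A) :
    ∀ b : B, (∃ p : Polynomial A, p ≠ 0 ∧ Polynomial.eval₂ A.subtype b p = 0) → b ∈ A := by
  intro b ⟨p, hp, hroot⟩
  by_cases hb : b = 0
  · simpa [hb] using A.zero_mem
  -- strong induction on natDegree
  suffices H : ∀ n, ∀ p : Polynomial A, p.natDegree = n → p ≠ 0 →
      Polynomial.eval₂ A.subtype b p = 0 → b ∈ A from H p.natDegree p rfl hp hroot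
  clear hp hroot p
  intro n
  induction n using Nat.strong_induction_on with
  | _ n ih =>
    intro p hn hp hroot
    have key : p.divX * Polynomial.X + Polynomial.C (p.coeff 0) = p :=
      Polynomial.divX_mul_X_add p
    have heval : Polynomial.eval₂ A.subtype b p.divX * b + (p.coeff 0 : B) = 0 := by
      calc Polynomial.eval₂ A.subtype b p.divX * b + (p.coeff 0 : B)
          = Polynomial.eval₂ A.subtype b (p.divX * Polynomial.X + Polynomial.C (p.coeff 0)) := by
            simp [Polynomial.eval₂_add, Polynomial.eval₂_mul, Polynomial.eval₂_C,
              Polynomial.eval₂_X]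
        _ = 0 := by rw [key]; exact hroot
    by_cases h0 : p.coeff 0 = 0
    · -- p = X * divX p, so divX p has root b, smaller degree
      have hdvx : p.divX ≠ 0 := by
        intro h
        apply hp
        rw [← key, h, h0]; simp
      have hroot' : Polynomial.eval₂ A.subtype b p.divX = 0 := by
        have : Polynomial.eval₂ A.subtype b p.divX * b = 0 := by
          simpa [h0] using heval
        rcases mul_eq_zero.mp this with h | h
        · exact h
        · exact absurd h hb
      have hdeg : p.divX.natDegree < n := by
        subst hn
        have hpos : 0 < p.natDegree := by
          rcases Nat.eq_zero_or_pos p.natDegree with h | h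
          · exfalso
            have := Polynomial.eq_C_of_natDegree_eq_zero h
            apply hp
            rw [this, h0]; simp
          · exact h
        have := Polynomial.natDegree_divX_eq_natDegree_tsub_one (p := p)
        omega
      exact ih p.divX.natDegree hdeg p.divX rfl hdvx hroot'
    · -- coeff 0 ≠ 0: b * c = -coeff 0 ∈ A, c ≠ 0
      set c := Polynomial.eval₂ A.subtype b p.divX with hc
      have hc0 : c ≠ 0 := by
        intro h
        apply h0
        have : (p.coeff 0 : B) = 0 := by simpa [h] using heval
        exact Subtype.ext this
      have hmem : b * c ∈ A := by
        have : b * c = -(p.coeff 0 : B) := by linear_combination heval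
        rw [this]
        exact A.neg_mem (p.coeff 0).2
      exact (hFC b c hb hc0 hmem).1
end

section
/- Let A be a factorially closed subring of an integral domain B and S a multiplicatively closed subset of A not containing 0. Then S⁻¹A is a factorially closed subring of S⁻¹B. -/
/-! Write `x = b/t`, `y = c/u`. If `s·xy = a` with `a ∈ A`, then, since `0 ∉ S` and `B` is a
domain, `(s b) c = a t u ∈ A` already holds in `B`; factorial closedness gives `s b, c ∈ A`,
so `x = (s b)/(s t)` and `y = c/u` lie in `S⁻¹A`. -/

def IsFactoriallyClosed {M₀ : Type*} [MulZeroClass M₀] (A : Set M₀) : Prop :=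
  ∀ f g : M₀, f ≠ 0 → g ≠ 0 → f * g ∈ A → f ∈ A ∧ g ∈ A

/-- The image of `S⁻¹A` in a localization `L` of `R` at `S`. -/
def localizedSet {R : Type*} [CommRing R] (A : Set R) (S : Submonoid R) (L : Type*)
    [CommRing L] [Algebra R L] : Set L :=
  {x | ∃ a ∈ A, ∃ s ∈ S, algebraMap R L s * x = algebraMap R L a}

namespace IsFactoriallyClosed

variable {R L : Type*} [CommRing R] [IsDomain R] [CommRing L] [Algebra R L]
  {S : Submonoid R} [IsLocalization S L]

theorem localizedSet {A : Submonoid R} (hA : IsFactoriallyClosed (A : Set R))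
    (hSA : (S : Set R) ⊆ A) (hS0 : (0 : R) ∉ S) :
    IsFactoriallyClosed (_root_.localizedSet (A : Set R) S L) := by
  rintro x y hx hy ⟨a, ha, s, hs, hxy⟩
  obtain ⟨b, t, rfl⟩ := IsLocalization.exists_mk'_eq S x
  obtain ⟨c, u, rfl⟩ := IsLocalization.exists_mk'_eq S y
  have hb : b ≠ 0 := by rintro rfl; exact hx (IsLocalization.mk'_zero t)
  have hc : c ≠ 0 := by rintro rfl; exact hy (IsLocalization.mk'_zero u)
  have hsbc : s * b * c = a * (t * u) := by
    apply IsLocalization.injective L (le_nonZeroDivisors_of_noZeroDivisors hS0)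
    rw [← IsLocalization.mk'_mul, IsLocalization.mul_mk'_eq_mk'_of_mul,
      IsLocalization.mk'_eq_iff_eq_mul, ← mul_assoc] at hxy
    rw [hxy, map_mul, Submonoid.coe_mul]
  have hsbc_mem : s * b * c ∈ A :=
    hsbc ▸ A.mul_mem ha (A.mul_mem (hSA t.2) (hSA u.2))
  obtain ⟨hsb, hcA⟩ :=
    hA (s * b) c (mul_ne_zero (ne_of_mem_of_not_mem hs hS0) hb) hc hsbc_mem
  refine ⟨⟨s * b, hsb, s * t, S.mul_mem hs t.2, ?_⟩, ⟨c, hcA, u, u.2, ?_⟩⟩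
  · rw [map_mul, mul_assoc, IsLocalization.mk'_spec', map_mul]
  · exact IsLocalization.mk'_spec' L c u

end IsFactoriallyClosed

/-- If `A` is a factorially closed subring of an integral domain `B` and `S` is a
multiplicatively closed subset of `A` not containing `0`, then `S⁻¹A` is a
factorially closed subring of `S⁻¹B`.  Here `S⁻¹B` is realized as `Localization S`
and `S⁻¹A` as the set of fractions `a / s` with `a ∈ A`, `s ∈ S`, i.e. the set of
`x` with `s • x ∈ A` for some `s ∈ S`. -/
theorem stmt3 {B : Type*} [CommRing B] [IsDomain B] (A : Subring B)
    (hFC : ∀ f g : B, f ≠ 0 → g ≠ 0 → f * g ∈ A → f ∈ A ∧ g ∈ A)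
    (S : Submonoid B) (hSA : (S : Set B) ⊆ A) (hS0 : (0 : B) ∉ S) :
    ∀ x y : Localization S, x ≠ 0 → y ≠ 0 →
      (∃ a ∈ A, ∃ s ∈ S, algebraMap B (Localization S) s * (x * y)
          = algebraMap B (Localization S) a) →
      ((∃ a ∈ A, ∃ s ∈ S, algebraMap B (Localization S) s * x
          = algebraMap B (Localization S) a) ∧
       (∃ a ∈ A, ∃ s ∈ S, algebraMap B (Localization S) s * y
          = algebraMap B (Localization S) a)) :=
  IsFactoriallyClosed.localizedSet (A := A.toSubmonoid) hFC hSA hS0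
end

section
/- Let B be a commutative ring containing ℚ and D a locally nilpotent derivation of B admitting a slice s (i.e., Ds = 1), with kernel A. Then B = A[s], i.e., B is generated as an A-algebra by s. -/
/-!
Let `S` be the subring generated by `A = ker D` and the slice `s`. By induction on the nilpotency
order of `b` one proves simultaneously that `b ∈ S` and that every `s ^ k * b` has an antiderivative
in `S`. If `D b` has these properties, an antiderivative `u ∈ S` of `D b` gives `b = (b - u) + u`
with `b - u ∈ A`; and if `D v = s ^ (k + 1) * D b` with `v ∈ S`, then `(s ^ (k + 1) * b - v) / (k + 1)`
is an antiderivative of `s ^ k * b` in `S`.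
-/

namespace Derivation

variable {R B : Type*} [CommSemiring R] [CommRing B] [Algebra R B]

theorem leibniz_pow_succ_mul_of_eq_one {D : Derivation R B B} {s : B} (hs : D s = 1)
    (k : ℕ) (b : B) :
    D (s ^ (k + 1) * b) = s ^ (k + 1) * D b + (k + 1) • (s ^ k * b) := by
  rw [leibniz, leibniz_pow, hs, Nat.add_sub_cancel]
  simp only [smul_eq_mul, mul_one]
  rw [mul_smul_comm, mul_comm b]

end Derivation

section Slice

variable {B : Type*} [CommRing B] [Algebra ℚ B] {D : Derivation ℚ B B} {S : Subring B}

theorem mem_of_map_eq_map (hker : ∀ b, D b = 0 → b ∈ S) {b u : B} (hu : u ∈ S)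
    (h : D u = D b) : b ∈ S := by
  have hbu : b - u ∈ S := hker _ (by rw [map_sub, h, sub_self])
  simpa using S.add_mem hbu hu

variable {s : B}

theorem exists_mem_map_eq_pow_mul (hker : ∀ b, D b = 0 → b ∈ S) (hsS : s ∈ S) (hs : D s = 1)
    {b : B} (hb : b ∈ S) (hDb : ∀ k : ℕ, ∃ v ∈ S, D v = s ^ k * D b) (k : ℕ) :
    ∃ t ∈ S, D t = s ^ k * b := by
  obtain ⟨v, hvS, hv⟩ := hDb (k + 1)
  have hc : algebraMap ℚ B (k + 1 : ℚ)⁻¹ ∈ S := hker _ (D.map_algebraMap _)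
  refine ⟨algebraMap ℚ B (k + 1 : ℚ)⁻¹ * (s ^ (k + 1) * b - v),
    S.mul_mem hc (S.sub_mem (S.mul_mem (S.pow_mem hsS _) hb) hvS), ?_⟩
  rw [← Algebra.smul_def, D.map_smul, map_sub, D.leibniz_pow_succ_mul_of_eq_one hs, hv,
    add_sub_cancel_left, ← Nat.cast_smul_eq_nsmul ℚ, smul_smul]
  push_cast
  rw [inv_mul_cancel₀ (by positivity), one_smul]

theorem mem_and_exists_mem_map_eq_pow_mul_of_iterate_eq_zero (hker : ∀ b, D b = 0 → b ∈ S)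
    (hsS : s ∈ S) (hs : D s = 1) (n : ℕ) :
    ∀ b : B, (⇑D)^[n] b = 0 → b ∈ S ∧ ∀ k : ℕ, ∃ t ∈ S, D t = s ^ k * b := by
  induction n with
  | zero =>
    rintro b rfl
    exact ⟨S.zero_mem, fun k => ⟨0, S.zero_mem, by simp⟩⟩
  | succ n ih =>
    intro b hb
    obtain ⟨-, hDb⟩ := ih (D b) (by rwa [← Function.iterate_succ_apply])
    obtain ⟨u, huS, hu⟩ := hDb 0
    have hbS : b ∈ S := mem_of_map_eq_map hker huS (by rw [hu, pow_zero, one_mul])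
    exact ⟨hbS, exists_mem_map_eq_pow_mul hker hsS hs hbS hDb⟩

end Slice

/-- (Slice theorem, part (a), first half.) If `B` is a commutative ring containing `ℚ`,
`D` a locally nilpotent derivation of `B` with kernel `A`, and `s` a slice (`D s = 1`),
then `B = A[s]`, i.e. `B` is generated as a ring by `A = ker D` together with `s`. -/
theorem stmt4 {B : Type*} [CommRing B] [Algebra ℚ B]
    (D : Derivation ℚ B B)
    (hLND : ∀ b : B, ∃ n : ℕ, (⇑D)^[n] b = 0)
    (s : B) (hs : D s = 1) :
    Subring.closure ({b : B | D b = 0} ∪ {s}) = ⊤ := by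
  set S := Subring.closure ({b : B | D b = 0} ∪ {s})
  have hker : ∀ b, D b = 0 → b ∈ S := fun b hb => Subring.subset_closure (Or.inl hb)
  have hsS : s ∈ S := Subring.subset_closure (Or.inr rfl)
  refine eq_top_iff.mpr fun b _ => ?_
  obtain ⟨n, hn⟩ := hLND b
  exact (mem_and_exists_mem_map_eq_pow_mul_of_iterate_eq_zero hker hsS hs n b hn).1
end

section
/- Let B be a ℚ-algebra which is an integral domain, D a locally nilpotent derivation of B with kernel A, and s ∈ B a slice (Ds = 1). Then s is transcendental over A and B ≅ A[X], a polynomial ring in one variable over A, via X ↦ s. -/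
/-- The kernel of a derivation, as a subring. -/
def derivationKernel {B : Type*} [CommRing B] [Algebra ℚ B] (D : Derivation ℚ B B) :
    Subring B where
  carrier := {b : B | D b = 0}
  one_mem' := by simp
  mul_mem' := by
    intro a b ha hb
    simp only [Set.mem_setOf_eq] at ha hb ⊢
    simp [Derivation.leibniz, ha, hb]
  zero_mem' := by simp
  add_mem' := by
    intro a b ha hb
    simp only [Set.mem_setOf_eq] at ha hb ⊢
    simp [ha, hb]
  neg_mem' := by
    intro a ha
    simp only [Set.mem_setOf_eq] at ha ⊢
    simp [ha]

open Polynomial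

/-!
Write `A` for the kernel of `D`. On `A[s]` the derivation `D` acts as `d/ds`. Hence a nonzero polynomial relation for `s`
over `A` differentiates to one of smaller degree, down to a nonzero constant: `s` is
transcendental. For surjectivity, induct on the order of nilpotency of `b`: if `D b = q(s)`,
pick `Q` with `Q' = q` (possible since `ℚ ⊆ A`); then `b - Q(s) ∈ A`.
-/

theorem Polynomial.derivative_surjective {R : Type*} [CommRing R] [Algebra ℚ R] :
    Function.Surjective (derivative : R[X] → R[X]) := by
  intro q
  induction q using Polynomial.induction_on' with
  | add p q hp hq =>
    obtain ⟨P, rfl⟩ := hp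
    obtain ⟨Q, rfl⟩ := hq
    exact ⟨P + Q, derivative_add⟩
  | monomial n a =>
    refine ⟨monomial (n + 1) ((n + 1 : ℚ)⁻¹ • a), ?_⟩
    rw [derivative_monomial, Nat.add_sub_cancel, smul_mul_assoc, mul_comm, ← nsmul_eq_mul,
      ← Nat.cast_smul_eq_nsmul ℚ, smul_smul, Nat.cast_succ, inv_mul_cancel₀ (by positivity),
      one_smul]

namespace derivationKernel

variable {B : Type*} [CommRing B] [Algebra ℚ B] (D : Derivation ℚ B B)

instance : Algebra ℚ (derivationKernel D) :=
  ((algebraMap ℚ B).codRestrict _ D.map_algebraMap).toAlgebra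

@[simp]
theorem apply_coe (a : derivationKernel D) : D a = 0 := a.2

theorem apply_eval₂ (p : (derivationKernel D)[X]) (x : B) :
    D (p.eval₂ (derivationKernel D).subtype x) =
      (derivative p).eval₂ (derivationKernel D).subtype x * D x := by
  induction p using Polynomial.induction_on with
  | C a => simp
  | add p q hp hq => simp [hp, hq, add_mul]
  | monomial n a _ =>
    simp only [derivative_C_mul_X_pow, eval₂_mul, eval₂_C, eval₂_X_pow, Derivation.leibniz,
      Derivation.leibniz_pow, apply_coe, smul_eq_mul, nsmul_eq_mul, Subring.subtype_apply]
    push_cast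
    ring

variable {D} {s : B}

theorem eq_zero_of_eval₂_slice_eq_zero (hs : D s = 1) (p : (derivationKernel D)[X])
    (hp : p.eval₂ (derivationKernel D).subtype s = 0) : p = 0 := by
  have : IsAddTorsionFree (derivationKernel D) := .of_module_rat _
  induction h : p.natDegree using Nat.strong_induction_on generalizing p with
  | _ n ih =>
    have hp' : (derivative p).eval₂ (derivationKernel D).subtype s = 0 := by
      simpa [hs, hp] using (apply_eval₂ D p s).symm
    have hdeg : p.natDegree = 0 := by
      by_contra hn
      exact hn (derivative_eq_zero.1 (ih _ (h ▸ natDegree_derivative_lt hn) _ hp' rfl))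
    obtain ⟨a, rfl⟩ := natDegree_eq_zero.1 hdeg
    simpa using hp

theorem eval₂RingHom_slice_injective (hs : D s = 1) :
    Function.Injective (eval₂RingHom (derivationKernel D).subtype s) :=
  (injective_iff_map_eq_zero _).2 (eq_zero_of_eval₂_slice_eq_zero hs)

theorem eval₂RingHom_slice_surjective (hs : D s = 1) (hLND : ∀ b : B, ∃ n : ℕ, (⇑D)^[n] b = 0) :
    Function.Surjective (eval₂RingHom (derivationKernel D).subtype s) := by
  set φ := eval₂RingHom (derivationKernel D).subtype s
  intro b
  obtain ⟨n, hn⟩ := hLND b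
  induction n generalizing b with
  | zero => exact ⟨0, by simpa using hn.symm⟩
  | succ n ih =>
    obtain ⟨q, hq⟩ := ih (D b) hn
    obtain ⟨Q, rfl⟩ := derivative_surjective q
    have hc : D (b - φ Q) = 0 := by
      rw [map_sub, coe_eval₂RingHom, apply_eval₂, hs, mul_one]
      exact sub_eq_zero.2 hq.symm
    exact ⟨Q + C ⟨b - φ Q, hc⟩, by simp [φ]⟩

end derivationKernel

open derivationKernel in
theorem stmt5_general {B : Type*} [CommRing B] [Algebra ℚ B]
    (D : Derivation ℚ B B)
    (hLND : ∀ b : B, ∃ n : ℕ, (⇑D)^[n] b = 0)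
    (s : B) (hs : D s = 1) :
    (∀ p : Polynomial (derivationKernel D), p ≠ 0 →
        Polynomial.eval₂ (derivationKernel D).subtype s p ≠ 0) ∧
    (∃ e : Polynomial (derivationKernel D) ≃+* B,
        e Polynomial.X = s ∧ ∀ a : derivationKernel D, e (Polynomial.C a) = ↑a) :=
  ⟨fun p hp h ↦ hp (eq_zero_of_eval₂_slice_eq_zero hs p h),
    RingEquiv.ofBijective _ ⟨eval₂RingHom_slice_injective hs,
      eval₂RingHom_slice_surjective hs hLND⟩, eval₂_X _ _, fun _ ↦ eval₂_C _ _⟩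

/-- (Slice theorem.) If `B` is a `ℚ`-algebra which is an integral domain, `D` a locally
nilpotent derivation of `B` with kernel `A`, and `s` a slice (`D s = 1`), then `s` is
transcendental over `A` and `B ≅ A[X]` via `X ↦ s`. -/
theorem stmt5 {B : Type*} [CommRing B] [IsDomain B] [Algebra ℚ B]
    (D : Derivation ℚ B B)
    (hLND : ∀ b : B, ∃ n : ℕ, (⇑D)^[n] b = 0)
    (s : B) (hs : D s = 1) :
    (∀ p : Polynomial (derivationKernel D), p ≠ 0 →
        Polynomial.eval₂ (derivationKernel D).subtype s p ≠ 0) ∧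
    (∃ e : Polynomial (derivationKernel D) ≃+* B,
        e Polynomial.X = s ∧ ∀ a : derivationKernel D, e (Polynomial.C a) = ↑a) :=
  stmt5_general D hLND s hs
end

section
/- Let k be a field of characteristic zero, R = k[a,b], B = R[X,Y,Z], and D the R-derivation with DX = b, DY = -a, DZ = aX + bY. Set u = aX + bY, v = bZ - uX, w = aZ + uY. Then Du = Dv = Dw = 0 and b·w - a·v = u². -/
open MvPolynomial

/-- `R = k[a,b]` with `a = X 0`, `b = X 1`. -/
abbrev Stmt7R (k : Type*) [Field k] := MvPolynomial (Fin 2) k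

/-- `B = R[X,Y,Z]` with `X = X 0`, `Y = X 1`, `Z = X 2`. -/
abbrev Stmt7B (k : Type*) [Field k] := MvPolynomial (Fin 3) (Stmt7R k)

namespace Derivation

variable {R A : Type*} [CommRing R] [CommRing A] [Algebra R A] (D : Derivation R A A)
  {p q s t : A}

theorem map_mul_add_mul_eq_zero (hp : D p = 0) (hq : D q = 0) (hs : D s = q) (ht : D t = -p) :
    D (p * s + q * t) = 0 := by
  rw [map_add, leibniz, leibniz, hp, hq, hs, ht, smul_eq_mul, smul_eq_mul]
  ring

theorem map_mul_sub_mul_eq_zero (hp : D p = 0) (hq : D q = 0) (hs : D s = q) (ht : D t = p) :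
    D (p * s - q * t) = 0 := by
  rw [map_sub, leibniz, leibniz, hp, hq, hs, ht, smul_eq_mul, smul_eq_mul]
  ring

end Derivation

theorem stmt7_general {k : Type*} [Field k]
    (D : Derivation (Stmt7R k) (Stmt7B k) (Stmt7B k))
    (hX : D (X 0) = (C (X 1) : Stmt7B k))
    (hY : D (X 1) = -(C (X 0) : Stmt7B k))
    (hZ : D (X 2) = (C (X 0) : Stmt7B k) * X 0 + (C (X 1) : Stmt7B k) * X 1)
    (u v w : Stmt7B k)
    (hu : u = (C (X 0) : Stmt7B k) * X 0 + (C (X 1) : Stmt7B k) * X 1)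
    (hv : v = (C (X 1) : Stmt7B k) * X 2 - u * X 0)
    (hw : w = (C (X 0) : Stmt7B k) * X 2 + u * X 1) :
    D u = 0 ∧ D v = 0 ∧ D w = 0 ∧
      (C (X 1) : Stmt7B k) * w - (C (X 0) : Stmt7B k) * v = u ^ 2 := by
  have ha : D (C (X 0)) = 0 := D.map_algebraMap _
  have hb : D (C (X 1)) = 0 := D.map_algebraMap _
  have hZu : D (X 2) = u := hZ.trans hu.symm
  have hDu : D u = 0 := hu ▸ D.map_mul_add_mul_eq_zero ha hb hX hY
  refine ⟨hDu, hv ▸ D.map_mul_sub_mul_eq_zero hb hDu hZu hX,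
    hw ▸ D.map_mul_add_mul_eq_zero ha hDu hZu hY, ?_⟩
  rw [hv, hw, hu]
  ring

/-- Let `k` be a field of characteristic zero, `R = k[a,b]`, `B = R[X,Y,Z]`, and let
`D` be the `R`-derivation with `DX = b`, `DY = -a`, `DZ = aX + bY`.  Set
`u = aX + bY`, `v = bZ - uX`, `w = aZ + uY`.  Then `Du = Dv = Dw = 0` and
`b·w - a·v = u²`. -/
theorem stmt7 {k : Type*} [Field k] [CharZero k]
    (D : Derivation (Stmt7R k) (Stmt7B k) (Stmt7B k))
    (hX : D (X 0) = (C (X 1) : Stmt7B k))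
    (hY : D (X 1) = -(C (X 0) : Stmt7B k))
    (hZ : D (X 2) = (C (X 0) : Stmt7B k) * X 0 + (C (X 1) : Stmt7B k) * X 1)
    (u v w : Stmt7B k)
    (hu : u = (C (X 0) : Stmt7B k) * X 0 + (C (X 1) : Stmt7B k) * X 1)
    (hv : v = (C (X 1) : Stmt7B k) * X 2 - u * X 0)
    (hw : w = (C (X 0) : Stmt7B k) * X 2 + u * X 1) :
    D u = 0 ∧ D v = 0 ∧ D w = 0 ∧
      (C (X 1) : Stmt7B k) * w - (C (X 0) : Stmt7B k) * v = u ^ 2 :=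
  stmt7_general D hX hY hZ u v w hu hv hw
end

section
/- Let k be a field of characteristic zero, R = k[t], B = R[X,Y,Z], D the R-derivation with DX = t, DY = tZ + X², DZ = -2X. Set G = tZ + X² and F = -GX + tY. Then DF = 0, DG = 0, and F² - G³ = t·H where H = tY² - 2tX²Z² - 2tXYZ - 2X³Y - X⁴Z - t²Z³; in particular DH = 0. -/
/-! `DG = 0` and `DF = 0` are direct computations (note `DY = G`), and `F² - G³ = tH` is a
polynomial identity. Then `t • DH = D(F² - G³) = 0`, and `t` is a nonzerodivisor on `B`. -/

open MvPolynomial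

/-- `R = k[t]`. -/
abbrev Stmt10R (k : Type*) [Field k] := Polynomial k

/-- `B = R[X,Y,Z]` with `X = X 0`, `Y = X 1`, `Z = X 2`. -/
abbrev Stmt10B (k : Type*) [Field k] := MvPolynomial (Fin 3) (Stmt10R k)

theorem Derivation.map_pow_sub_pow_eq_zero {R A : Type*} [CommRing R] [CommRing A]
    [Algebra R A] (D : Derivation R A A) {f g : A} (hf : D f = 0) (hg : D g = 0) (m n : ℕ) :
    D (f ^ m - g ^ n) = 0 := by
  simp [Derivation.leibniz_pow, hf, hg]

theorem Derivation.eq_zero_of_map_smul_eq_zero {R A : Type*} [CommRing R] [CommRing A]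
    [IsDomain R] [Algebra R A] [Module.IsTorsionFree R A] (D : Derivation R A A) {r : R}
    (hr : r ≠ 0) {h : A} (hrh : D (r • h) = 0) : D h = 0 := by
  rw [D.map_smul, smul_eq_zero] at hrh
  exact hrh.resolve_left hr

theorem stmt10_general {k : Type*} [Field k]
    (D : Derivation (Stmt10R k) (Stmt10B k) (Stmt10B k))
    (hX : D (X 0) = (C Polynomial.X : Stmt10B k))
    (hY : D (X 1) = (C Polynomial.X : Stmt10B k) * X 2 + X 0 ^ 2)
    (hZ : D (X 2) = -(2 * X 0))
    (F G H : Stmt10B k)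
    (hG : G = (C Polynomial.X : Stmt10B k) * X 2 + X 0 ^ 2)
    (hF : F = -(G * X 0) + (C Polynomial.X : Stmt10B k) * X 1)
    (hH : H = (C Polynomial.X : Stmt10B k) * X 1 ^ 2
        - 2 * (C Polynomial.X : Stmt10B k) * X 0 ^ 2 * X 2 ^ 2
        - 2 * (C Polynomial.X : Stmt10B k) * X 0 * X 1 * X 2
        - 2 * X 0 ^ 3 * X 1 - X 0 ^ 4 * X 2
        - (C Polynomial.X : Stmt10B k) ^ 2 * X 2 ^ 3) :
    D F = 0 ∧ D G = 0 ∧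
      F ^ 2 - G ^ 3 = (C Polynomial.X : Stmt10B k) * H ∧ D H = 0 := by
  have ht : D (C Polynomial.X) = 0 := D.map_algebraMap _
  have hDG : D G = 0 := by
    simp only [hG, map_add, Derivation.leibniz, Derivation.leibniz_pow, ht, hX, hZ, smul_eq_mul]
    ring
  have hDF : D F = 0 := by
    rw [← hG] at hY
    simp only [hF, map_add, map_neg, Derivation.leibniz, ht, hX, hY, hDG, smul_eq_mul]
    ring
  have hFG : F ^ 2 - G ^ 3 = C Polynomial.X * H := by
    subst hH hF hG
    ring
  refine ⟨hDF, hDG, hFG, D.eq_zero_of_map_smul_eq_zero Polynomial.X_ne_zero ?_⟩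
  rw [← C_mul', ← hFG]
  exact D.map_pow_sub_pow_eq_zero hDF hDG 2 3

/-- With `R = k[t]`, `B = R[X,Y,Z]` and `D` the `R`-derivation with `DX = t`,
`DY = tZ + X²`, `DZ = -2X`:  setting `G = tZ + X²`, `F = -GX + tY` and
`H = tY² - 2tX²Z² - 2tXYZ - 2X³Y - X⁴Z - t²Z³`, one has `DF = 0`, `DG = 0`,
`F² - G³ = t·H`, and `DH = 0`. -/
theorem stmt10 {k : Type*} [Field k] [CharZero k]
    (D : Derivation (Stmt10R k) (Stmt10B k) (Stmt10B k))
    (hX : D (X 0) = (C Polynomial.X : Stmt10B k))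
    (hY : D (X 1) = (C Polynomial.X : Stmt10B k) * X 2 + X 0 ^ 2)
    (hZ : D (X 2) = -(2 * X 0))
    (F G H : Stmt10B k)
    (hG : G = (C Polynomial.X : Stmt10B k) * X 2 + X 0 ^ 2)
    (hF : F = -(G * X 0) + (C Polynomial.X : Stmt10B k) * X 1)
    (hH : H = (C Polynomial.X : Stmt10B k) * X 1 ^ 2
        - 2 * (C Polynomial.X : Stmt10B k) * X 0 ^ 2 * X 2 ^ 2
        - 2 * (C Polynomial.X : Stmt10B k) * X 0 * X 1 * X 2
        - 2 * X 0 ^ 3 * X 1 - X 0 ^ 4 * X 2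
        - (C Polynomial.X : Stmt10B k) ^ 2 * X 2 ^ 3) :
    D F = 0 ∧ D G = 0 ∧
      F ^ 2 - G ^ 3 = (C Polynomial.X : Stmt10B k) * H ∧ D H = 0 :=
  stmt10_general D hX hY hZ F G H hG hF hH
end

section
/- Let k be a field of characteristic zero, R = k[t], B = R[X,Y,Z], and D the R-derivation with DX = t, DY = X, DZ = Y. Set F = 2tY - X², G = 3t²Z - 3tXY + X³, and H = 8tY³ + 9t²Z² - 18tXYZ - 3X²Y² + 6X³Z. Then D is locally nilpotent, DF = DG = DH = 0, and F³ + G² = t²H. -/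
open MvPolynomial

/-- `R = k[t]`. -/
abbrev Stmt13R (k : Type*) [Field k] := Polynomial k

/-- `B = R[X,Y,Z]` with `X = X 0`, `Y = X 1`, `Z = X 2`. -/
abbrev Stmt13B (k : Type*) [Field k] := MvPolynomial (Fin 3) (Stmt13R k)

/-!
The elements killed by some power of a derivation form a subalgebra, by the Leibniz rule:
if `D^m a = 0` and `D^n b = 0` then `D^(m+n) (ab) = 0`. Since `D` sends `Z ↦ Y ↦ X ↦ t ↦ 0`,
every generator of `B` lies in it, so `D` is locally nilpotent. The remaining claims are direct
computations.
-/

namespace Derivation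

variable {R A : Type*} [CommRing R] [CommRing A] [Algebra R A] (D : Derivation R A A)

theorem map_ofNat (n : ℕ) [n.AtLeastTwo] : D (OfNat.ofNat n : A) = 0 :=
  D.map_natCast n

theorem iterate_eq_zero_of_le {m n : ℕ} {a : A} (ha : D^[m] a = 0) (hmn : m ≤ n) :
    D^[n] a = 0 := by
  rw [← Nat.sub_add_cancel hmn, Function.iterate_add_apply, ha, iterate_map_zero]

theorem iterate_mul_eq_zero {m n : ℕ} {a b : A} (ha : D^[m] a = 0) (hb : D^[n] b = 0) :
    D^[m + n] (a * b) = 0 := by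
  induction m generalizing n a b with
  | zero => simp [show a = 0 from ha]
  | succ m ihm =>
    induction n generalizing b with
    | zero => simp [show b = 0 from hb]
    | succ n ihn =>
      have hDa : D^[m] (D a) = 0 := by rwa [← Function.iterate_succ_apply]
      have hDb : D^[n] (D b) = 0 := by rwa [← Function.iterate_succ_apply]
      rw [← add_assoc, Function.iterate_succ_apply, leibniz, smul_eq_mul, smul_eq_mul,
        iterate_map_add, ihn hDb, mul_comm b, show m + 1 + n = m + (n + 1) by omega, ihm hDa hb,
        add_zero]

def locallyNilpotentSubalgebra : Subalgebra R A where
  carrier := {a | ∃ n, D^[n] a = 0}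
  mul_mem' := fun ⟨m, ha⟩ ⟨n, hb⟩ => ⟨m + n, D.iterate_mul_eq_zero ha hb⟩
  add_mem' := fun ⟨m, ha⟩ ⟨n, hb⟩ => ⟨m + n, by
    rw [iterate_map_add, D.iterate_eq_zero_of_le ha (m.le_add_right n),
      D.iterate_eq_zero_of_le hb (n.le_add_left m), add_zero]⟩
  algebraMap_mem' r := ⟨1, D.map_algebraMap r⟩

end Derivation

theorem MvPolynomial.exists_iterate_derivation_eq_zero {σ R : Type*} [CommRing R]
    (D : Derivation R (MvPolynomial σ R) (MvPolynomial σ R)) (h : ∀ i, ∃ n, D^[n] (X i) = 0)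
    (f : MvPolynomial σ R) : ∃ n, D^[n] f = 0 :=
  Algebra.adjoin_le (S := D.locallyNilpotentSubalgebra) (Set.range_subset_iff.2 h)
    (by rw [adjoin_range_X]; trivial)

theorem stmt13_general {k : Type*} [Field k]
    (D : Derivation (Stmt13R k) (Stmt13B k) (Stmt13B k))
    (hX : D (X 0) = (C Polynomial.X : Stmt13B k))
    (hY : D (X 1) = X 0)
    (hZ : D (X 2) = X 1)
    (F G H : Stmt13B k)
    (hF : F = 2 * (C Polynomial.X : Stmt13B k) * X 1 - X 0 ^ 2)
    (hG : G = 3 * (C Polynomial.X : Stmt13B k) ^ 2 * X 2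
        - 3 * (C Polynomial.X : Stmt13B k) * X 0 * X 1 + X 0 ^ 3)
    (hH : H = 8 * (C Polynomial.X : Stmt13B k) * X 1 ^ 3
        + 9 * (C Polynomial.X : Stmt13B k) ^ 2 * X 2 ^ 2
        - 18 * (C Polynomial.X : Stmt13B k) * X 0 * X 1 * X 2
        - 3 * X 0 ^ 2 * X 1 ^ 2 + 6 * X 0 ^ 3 * X 2) :
    (∀ f : Stmt13B k, ∃ n : ℕ, (⇑D)^[n] f = 0) ∧
    D F = 0 ∧ D G = 0 ∧ D H = 0 ∧
    F ^ 3 + G ^ 2 = (C Polynomial.X : Stmt13B k) ^ 2 * H := by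
  have ht : D^[1] (C Polynomial.X) = 0 := derivation_C D _
  have hX0 : D^[2] (X 0) = 0 := by rwa [Function.iterate_succ_apply, hX]
  have hX1 : D^[3] (X 1) = 0 := by rwa [Function.iterate_succ_apply, hY]
  have hX2 : D^[4] (X 2) = 0 := by rwa [Function.iterate_succ_apply, hZ]
  have hgen : ∀ i, ∃ n, D^[n] (X i) = 0 := by
    intro i
    fin_cases i
    exacts [⟨2, hX0⟩, ⟨3, hX1⟩, ⟨4, hX2⟩]
  subst hF hG hH
  refine ⟨exists_iterate_derivation_eq_zero D hgen, ?_, ?_, ?_, by ring⟩ <;>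
    simp only [map_sub, map_add, Derivation.leibniz, Derivation.leibniz_pow, hX, hY, hZ,
      derivation_C, D.map_ofNat, smul_eq_mul, nsmul_eq_mul] <;>
    ring

/-- Let `k` be a field of characteristic zero, `R = k[t]`, `B = R[X,Y,Z]`, and `D` the
`R`-derivation with `DX = t`, `DY = X`, `DZ = Y`.  Set `F = 2tY - X²`,
`G = 3t²Z - 3tXY + X³` and `H = 8tY³ + 9t²Z² - 18tXYZ - 3X²Y² + 6X³Z`.
Then `D` is locally nilpotent, `DF = DG = DH = 0` and `F³ + G² = t²H`. -/
theorem stmt13 {k : Type*} [Field k] [CharZero k]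
    (D : Derivation (Stmt13R k) (Stmt13B k) (Stmt13B k))
    (hX : D (X 0) = (C Polynomial.X : Stmt13B k))
    (hY : D (X 1) = X 0)
    (hZ : D (X 2) = X 1)
    (F G H : Stmt13B k)
    (hF : F = 2 * (C Polynomial.X : Stmt13B k) * X 1 - X 0 ^ 2)
    (hG : G = 3 * (C Polynomial.X : Stmt13B k) ^ 2 * X 2
        - 3 * (C Polynomial.X : Stmt13B k) * X 0 * X 1 + X 0 ^ 3)
    (hH : H = 8 * (C Polynomial.X : Stmt13B k) * X 1 ^ 3
        + 9 * (C Polynomial.X : Stmt13B k) ^ 2 * X 2 ^ 2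
        - 18 * (C Polynomial.X : Stmt13B k) * X 0 * X 1 * X 2
        - 3 * X 0 ^ 2 * X 1 ^ 2 + 6 * X 0 ^ 3 * X 2) :
    (∀ f : Stmt13B k, ∃ n : ℕ, (⇑D)^[n] f = 0) ∧
    D F = 0 ∧ D G = 0 ∧ D H = 0 ∧
    F ^ 3 + G ^ 2 = (C Polynomial.X : Stmt13B k) ^ 2 * H :=
  stmt13_general D hX hY hZ F G H hF hG hH
end

section
/- Let k be a field of characteristic zero and D a nonzero locally nilpotent derivation of an integral k-domain B with kernel A. Then the transcendence degree of Frac(B) over Frac(A) equals 1. -/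
set_option maxHeartbeats 1000000
set_option synthInstance.maxHeartbeats 400000

/-- The kernel of a `k`-derivation, as a `k`-subalgebra. -/
def derKer {k B : Type*} [Field k] [CommRing B] [Algebra k B]
    (D : Derivation k B B) : Subalgebra k B where
  carrier := {b : B | D b = 0}
  mul_mem' := by
    intro a b ha hb
    simp only [Set.mem_setOf_eq] at ha hb ⊢
    simp [Derivation.leibniz, ha, hb]
  add_mem' := by
    intro a b ha hb
    simp only [Set.mem_setOf_eq] at ha hb ⊢
    simp [ha, hb]
  algebraMap_mem' := by intro r; simp

section Aux

variable {k B : Type*} [Field k] [CommRing B] [Algebra k B]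

theorem mem_derKer {D : Derivation k B B} {z : B} : z ∈ derKer D ↔ D z = 0 := Iff.rfl

/-- `D` as a derivation over its own kernel. -/
def derExt (D : Derivation k B B) : Derivation (derKer D) B B where
  toFun := ⇑D
  map_add' := fun a b => D.map_add a b
  map_smul' := by
    intro c b
    have hc : D (c : B) = 0 := c.2
    rw [RingHom.id_apply, Algebra.smul_def, Algebra.smul_def]
    have : (algebraMap (derKer D) B) c = (c : B) := rfl
    show D ((c : B) * b) = (c : B) * D b
    rw [D.leibniz, hc, smul_eq_mul, smul_eq_mul, mul_zero, add_zero]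
  map_one_eq_zero' := D.map_one_eq_zero
  leibniz' := fun a b => D.leibniz a b

@[simp] theorem derExt_apply (D : Derivation k B B) (b : B) : derExt D b = D b := rfl

variable [CharZero k]

/-- Antiderivative in `(derKer D)[X]`. -/
theorem exists_antideriv (D : Derivation k B B) (p : Polynomial (derKer D)) :
    ∃ q : Polynomial (derKer D), Polynomial.derivative q = p := by
  classical
  refine ⟨∑ i ∈ p.support,
    Polynomial.C (algebraMap k (derKer D) (((i : ℕ) + 1 : k))⁻¹ * p.coeff i) *
      Polynomial.X ^ (i + 1), ?_⟩
  rw [map_sum]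
  conv_rhs => rw [p.as_sum_support]
  refine Finset.sum_congr rfl fun i hi => ?_
  rw [Polynomial.derivative_C_mul_X_pow, Nat.add_sub_cancel,
    Polynomial.C_mul_X_pow_eq_monomial]
  congr 1
  push_cast
  have h1 : ((i : ℕ) + 1 : derKer D) = algebraMap k (derKer D) ((i : ℕ) + 1 : k) := by
    push_cast [map_natCast, map_add, map_one]
    rfl
  rw [mul_comm (algebraMap k (derKer D) _) (p.coeff i), mul_assoc, h1, ← map_mul,
    inv_mul_cancel₀ (by exact_mod_cast Nat.succ_ne_zero i), map_one, mul_one]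

variable {D : Derivation k B B} {x a : B}

theorem pow_mul_mem (hxa : D x = a) (ha : a ∈ derKer D) (m : ℕ) (b : B)
    (hb : (⇑D)^[m] b = 0) :
    ∃ p : Polynomial (derKer D), Polynomial.aeval x p = a ^ m * b := by
  induction m generalizing b with
  | zero =>
    simp only [Function.iterate_zero, id_eq] at hb
    exact ⟨0, by simp [hb]⟩
  | succ m ih =>
    obtain ⟨p, hp⟩ := ih (D b) (by rwa [← Function.iterate_succ_apply])
    obtain ⟨q, hq⟩ := exists_antideriv D p
    have h1 : D (Polynomial.aeval x q) = Polynomial.aeval x p * a := by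
      have h := (derExt D).map_aeval q x
      simp only [derExt_apply] at h
      rw [h, hq, hxa, smul_eq_mul]
    have h2 : D (a ^ (m + 1) * b) = a ^ (m + 1) * D b := by
      rw [D.leibniz, D.leibniz_pow, (show D a = 0 from ha)]
      simp
    have hder : D (a ^ (m + 1) * b - Polynomial.aeval x q) = 0 := by
      rw [map_sub, h1, h2, hp]
      ring
    refine ⟨Polynomial.C ⟨_, hder⟩ + q, ?_⟩
    rw [map_add, Polynomial.aeval_C]
    show (a ^ (m + 1) * b - Polynomial.aeval x q) + Polynomial.aeval x q = _
    ring

variable [IsDomain B]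

theorem x_transcendental (hxa : D x = a) (ha0 : a ≠ 0) :
    Transcendental (derKer D) x := by
  have hinj : Function.Injective (algebraMap (derKer D) B) := Subtype.val_injective
  haveI : CharZero B := charZero_of_injective_algebraMap (algebraMap k B).injective
  haveI : CharZero (derKer D) := by
    refine ⟨fun m n h => ?_⟩
    have : ((m : derKer D) : B) = ((n : derKer D) : B) := by rw [h]
    push_cast at this
    exact_mod_cast this
  haveI : NoZeroDivisors (derKer D) := by
    refine ⟨fun {u v} h => ?_⟩
    have : (u : B) * (v : B) = 0 := by exact_mod_cast congrArg Subtype.val h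
    rcases mul_eq_zero.1 this with h' | h'
    · exact Or.inl (Subtype.ext h')
    · exact Or.inr (Subtype.ext h')
  have key : ∀ n (p : Polynomial (derKer D)), p.natDegree ≤ n →
      Polynomial.aeval x p = 0 → p = 0 := by
    intro n
    induction n with
    | zero =>
      intro p hdeg hev
      rw [Polynomial.eq_C_of_natDegree_le_zero hdeg] at hev ⊢
      rw [Polynomial.aeval_C] at hev
      rw [show p.coeff 0 = 0 from hinj (by simpa using hev)]
      simp
    | succ n ih =>
      intro p hdeg hev
      have hd : Polynomial.aeval x (Polynomial.derivative p) * a = 0 := by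
        have h := (derExt D).map_aeval p x
        simp only [derExt_apply, hev, map_zero] at h
        rw [← hxa]
        rw [smul_eq_mul] at h
        exact h.symm
      have h0 : Polynomial.aeval x (Polynomial.derivative p) = 0 :=
        (mul_eq_zero.1 hd).resolve_right ha0
      have hder0 : Polynomial.derivative p = 0 :=
        ih _ (le_trans (Polynomial.natDegree_derivative_le p) (by omega)) h0
      have hnd : p.natDegree = 0 := Polynomial.natDegree_eq_zero_of_derivative_eq_zero hder0
      exact ih p (by omega) hev
  rintro ⟨p, hp0, hev⟩
  exact hp0 (key _ p le_rfl hev)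

end Aux

/-- Let `k` be a field of characteristic zero and `D` a nonzero locally nilpotent
derivation of an integral `k`-domain `B`, with kernel `A`.  Then the transcendence
degree of `Frac B` over `Frac A` is `1`; equivalently, `B` has a transcendence basis
over `A` consisting of a single element. -/
theorem stmt17 {k B : Type*} [Field k] [CharZero k] [CommRing B] [IsDomain B]
    [Algebra k B] (D : Derivation k B B)
    (hLND : ∀ b : B, ∃ n : ℕ, (⇑D)^[n] b = 0) (hD : D ≠ 0) :
    ∃ x : B, IsTranscendenceBasis (derKer D) ![x] := by
  classical
  obtain ⟨b, hb⟩ : ∃ b, D b ≠ 0 := by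
    by_contra h
    push_neg at h
    exact hD (by ext b; simp [h b])
  have hex : ∃ n, (⇑D)^[n] b = 0 := hLND b
  have hn0 : (⇑D)^[Nat.find hex] b = 0 := Nat.find_spec hex
  set n := Nat.find hex with hn
  have hn2 : 2 ≤ n := by
    by_contra h
    interval_cases n
    · simp only [Function.iterate_zero, id_eq] at hn0
      exact hb (by rw [hn0]; simp)
    · exact hb (by simpa using hn0)
  set x := (⇑D)^[n - 2] b with hxdef
  have hDx : D x = (⇑D)^[n - 1] b := by
    rw [hxdef, show n - 1 = (n - 2) + 1 by omega, Function.iterate_succ_apply']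
  have ha0 : D x ≠ 0 := by
    rw [hDx]
    exact Nat.find_min hex (show n - 1 < n by omega)
  have hit : D ((⇑D)^[n - 1] b) = (⇑D)^[n] b := by
    conv_rhs => rw [show n = (n - 1) + 1 by omega]
    rw [Function.iterate_succ_apply']
  have haK : D x ∈ derKer D := by
    rw [mem_derKer, hDx, hit]
    exact hn0
  have hind : AlgebraicIndependent (derKer D) ![x] :=
    algebraicIndependent_iff_transcendental.2 (x_transcendental rfl ha0)
  have hrange : Set.range ![x] = {x} := by
    ext z
    simp [Matrix.range_cons, Matrix.range_empty]
  refine ⟨x, hind, ?_⟩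
  intro s hs hsub
  have hxs : x ∈ s := hsub ⟨0, rfl⟩
  refine Set.Subset.antisymm hsub fun y hy => ?_
  rw [hrange, Set.mem_singleton_iff]
  by_contra hne
  -- y is algebraic over the adjoin of {x}
  obtain ⟨m, hm⟩ := hLND y
  obtain ⟨p, hp⟩ := pow_mul_mem rfl haK m y hm
  have halg : IsAlgebraic (Algebra.adjoin (derKer D) (Set.range ![x])) y := by
    rw [hrange]
    set S := Algebra.adjoin (derKer D) ({x} : Set B) with hS
    have hamem : D x ∈ S := Subalgebra.algebraMap_mem S (⟨D x, haK⟩ : derKer D)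
    have hc : D x ^ m * y ∈ S := by
      rw [← hp, hS, Algebra.adjoin_singleton_eq_range_aeval]
      exact ⟨p, rfl⟩
    refine ⟨Polynomial.C ((⟨D x, hamem⟩ : S) ^ m) * Polynomial.X
      - Polynomial.C (⟨D x ^ m * y, hc⟩ : S), ?_, ?_⟩
    · intro h
      have h1 := congrArg (fun q => Polynomial.coeff q 1) h
      simp only [Polynomial.coeff_sub, Polynomial.coeff_C_mul, Polynomial.coeff_X_one,
        Polynomial.coeff_C, mul_one, Polynomial.coeff_zero] at h1
      have : ((⟨D x, hamem⟩ : S) ^ m : S) = 0 := by simpa using h1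
      have h2 : (D x) ^ m = 0 := by simpa using congrArg Subtype.val this
      exact pow_ne_zero m ha0 h2
    · have hvala : algebraMap S B (⟨D x, hamem⟩ : S) = D x := rfl
      have hvalc : algebraMap S B (⟨D x ^ m * y, hc⟩ : S) = D x ^ m * y := rfl
      simp only [map_sub, map_mul, map_pow, Polynomial.aeval_C, Polynomial.aeval_X,
        hvala, hvalc]
      ring
  -- but y together with x is algebraically independent, contradiction
  have hpair : AlgebraicIndependent (derKer D) fun o : Option (Fin 1) => o.elim y ![x] := by
    have hginj : Function.Injective
        (fun o : Option (Fin 1) => o.elim (⟨y, hy⟩ : s) fun _ => (⟨x, hxs⟩ : s)) := by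
      intro o o' h
      match o, o' with
      | none, none => rfl
      | some i, some j => simp [Subsingleton.elim i j]
      | none, some j =>
        exact absurd (congrArg Subtype.val h) hne
      | some i, none =>
        exact absurd (congrArg Subtype.val h).symm hne
    have h := hs.comp _ hginj
    convert h with o
    match o with
    | none => rfl
    | some i =>
      show ![x] i = x
      fin_cases i
      rfl
  exact (hind.option_iff_transcendental y).1 hpair halg
end
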